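/- Let g : ℝ → ℂ be a Schwartz function, and for each positive integer n let g_n : ℤ → ℂ be the sampled function g_n(j) = g(j/n). Then the functions (D(D g_n))^_n(l) and F_n(l) (formed from g_n) are uniformly bounded independently of n: there exists a real constant W such that for all integers n ≥ 2 and all integers l with -n² ≤ l ≤ n²-1, |(D(D g_n))^_n(l)| ≤ W and |F_n(l)| ≤ W. -/

import Mathlib

/-!
Write `g_n(j) = g(j/n)`. Away from the right end of the grid, `D(D g_n)(j)` is `n²` times a
second difference of `g` with step `1/n`, so by the mean value theorem it is bounded by the
supremum of `|g''|` on `[j/n, (j+2)/n]`, which is `O(n² / (n² + j²))`; at the right end only a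
first difference survives and the decay of `g'` makes it `O(1/n)`. The transform is at most
`(1/n) ∑_j |D(D g_n)(j)|`, and `∑_j n² / (n² + j²) = O(n)` is a Riemann sum for
`∫ dx / (1 + x²)`. In `F_n` the factors `ψ_n, φ_n` are `O(n)`, while every other factor involves
only `g(-n)`, `g(n - 1/n)` or `(D g_n)(-n²)`, which are `O(1/n²)` by the decay of `g` and `g'`.
-/

open Complex Finset

/-- The discrete derivative: `Dg(j) = n·(g(j+1) - g(j))` for `-n² ≤ j ≤ n²-2`,
and `Dg(n²-1) = 0`. -/
noncomputable def discDeriv (n : ℕ) (g : ℤ → ℂ) : ℤ → ℂ :=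
  fun j => if j = (n : ℤ) ^ 2 - 1 then 0 else (n : ℂ) * (g (j + 1) - g j)

/-- The discrete shift: `Sg(j) = g(j+1)` for `-n² ≤ j ≤ n²-2`, and `Sg(n²-1) = 0`. -/
noncomputable def discShift (n : ℕ) (g : ℤ → ℂ) : ℤ → ℂ :=
  fun j => if j = (n : ℤ) ^ 2 - 1 then 0 else g (j + 1)
/-- The discrete Fourier transform `ĝ_n(l) = (1/n) ∑_{j=-n²}^{n²-1} g(j) e^{-π i j l/n²}`. -/
noncomputable def discFT (n : ℕ) (g : ℤ → ℂ) : ℤ → ℂ :=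
  fun l => (1 / (n : ℂ)) * ∑ j ∈ Finset.Icc (-(n : ℤ) ^ 2) ((n : ℤ) ^ 2 - 1),
    g j * Complex.exp (-((Real.pi : ℂ) * Complex.I * (j : ℂ) * (l : ℂ)) / (n : ℂ) ^ 2)

/-- `ψ_n(l) = n·(e^{π i l/n²} - 1)`. -/
noncomputable def psiF (n : ℕ) (l : ℤ) : ℂ :=
  (n : ℂ) * (Complex.exp ((Real.pi : ℂ) * Complex.I * (l : ℂ) / (n : ℂ) ^ 2) - 1)

/-- `φ_n(l) = n·(e^{-π i l/n²} - 1)`. -/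
noncomputable def phiF (n : ℕ) (l : ℤ) : ℂ :=
  (n : ℂ) * (Complex.exp (-((Real.pi : ℂ) * Complex.I * (l : ℂ)) / (n : ℂ) ^ 2) - 1)

/-- `C_n(l) = g(n²-1)·e^{-π i (n²-1) l/n²} - g(-n²)·e^{π i l}`. -/
noncomputable def CF (n : ℕ) (g : ℤ → ℂ) (l : ℤ) : ℂ :=
  g ((n : ℤ) ^ 2 - 1) *
      Complex.exp (-((Real.pi : ℂ) * Complex.I * ((n : ℂ) ^ 2 - 1) * (l : ℂ)) / (n : ℂ) ^ 2) -
    g (-(n : ℤ) ^ 2) * Complex.exp ((Real.pi : ℂ) * Complex.I * (l : ℂ))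

/-- `D_n(l) = -(1/n)·g(-n²)·e^{π i l/n²}·e^{π i l}`. -/
noncomputable def DF (n : ℕ) (g : ℤ → ℂ) (l : ℤ) : ℂ :=
  -(1 / (n : ℂ)) * g (-(n : ℤ) ^ 2) *
    Complex.exp ((Real.pi : ℂ) * Complex.I * (l : ℂ) / (n : ℂ) ^ 2) *
    Complex.exp ((Real.pi : ℂ) * Complex.I * (l : ℂ))

/-- `C'_n(l) = -(Dg)(-n²)·e^{π i l}`. -/
noncomputable def CF' (n : ℕ) (g : ℤ → ℂ) (l : ℤ) : ℂ :=
  -(discDeriv n g (-(n : ℤ) ^ 2)) * Complex.exp ((Real.pi : ℂ) * Complex.I * (l : ℂ))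

/-- `D'_n(l) = -(1/n)·(Dg)(-n²)·e^{π i l/n²}·e^{π i l}`. -/
noncomputable def DF' (n : ℕ) (g : ℤ → ℂ) (l : ℤ) : ℂ :=
  -(1 / (n : ℂ)) * discDeriv n g (-(n : ℤ) ^ 2) *
    Complex.exp ((Real.pi : ℂ) * Complex.I * (l : ℂ) / (n : ℂ) ^ 2) *
    Complex.exp ((Real.pi : ℂ) * Complex.I * (l : ℂ))

/-- `E_n(l) = φ_n(l)·D_n(l) - C_n(l)`. -/
noncomputable def EF (n : ℕ) (g : ℤ → ℂ) (l : ℤ) : ℂ :=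
  phiF n l * DF n g l - CF n g l

/-- `F_n(l) = ψ_n(l)·φ_n(l)·D_n(l) - ψ_n(l)·C_n(l) + φ_n(l)·D'_n(l) - C'_n(l)`. -/
noncomputable def FF (n : ℕ) (g : ℤ → ℂ) (l : ℤ) : ℂ :=
  psiF n l * phiF n l * DF n g l - psiF n l * CF n g l + phiF n l * DF' n g l - CF' n g l

theorem Int.sum_Ico_sub {M : Type*} [AddCommGroup M] (f : ℤ → M) {m n : ℤ} (hmn : m ≤ n) :
    ∑ j ∈ Ico m n, (f (j + 1) - f j) = f n - f m := by
  obtain ⟨k, rfl⟩ := Int.le.dest hmn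
  induction k with
  | zero => simp
  | succ k ih =>
    rw [Nat.cast_succ, ← add_assoc, Finset.Ico_add_one_right_eq_Icc,
      ← Finset.Ico_insert_right (by omega), sum_insert (by simp), ih (by omega)]
    abel

-- `x ↦ x / (a + |x|)` is increasing with values in `[-1, 1]`, so these bounds telescope.
lemma sq_div_sq_add_sq_le_telescope {a : ℝ} (ha : 1 ≤ a) (j : ℤ) :
    a ^ 2 / (a ^ 2 + (j : ℝ) ^ 2) ≤
      4 * a * (((j + 1 : ℤ) : ℝ) / (a + |((j + 1 : ℤ) : ℝ)|) - (j : ℝ) / (a + |(j : ℝ)|)) := by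
  push_cast
  rcases le_or_gt 0 j with hj | hj
  · have hj₀ : (0 : ℝ) ≤ j := by exact_mod_cast hj
    have hj₁ : (j : ℝ) ≤ j ^ 2 := by exact_mod_cast (show j ≤ j ^ 2 by nlinarith)
    have key : (a + j) * (a + j + 1) ≤ 4 * (a ^ 2 + j ^ 2) := by
      nlinarith [sq_nonneg (a - j)]
    rw [abs_of_nonneg hj₀, abs_of_nonneg (by linarith),
      div_sub_div _ _ (by positivity) (by positivity), mul_div_assoc',
      div_le_div_iff₀ (by positivity) (by positivity)]
    nlinarith [mul_le_mul_of_nonneg_left key (sq_nonneg a)]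
  · have hj₁ : (j : ℝ) ≤ -1 := by exact_mod_cast (show j ≤ -1 by omega)
    have key : (a - (j + 1)) * (a - j) ≤ 4 * (a ^ 2 + j ^ 2) := by
      nlinarith [sq_nonneg (a + j)]
    rw [abs_of_nonpos (by linarith), abs_of_neg (by linarith), ← sub_eq_add_neg,
      ← sub_eq_add_neg, div_sub_div _ _ (by linarith) (by linarith), mul_div_assoc',
      div_le_div_iff₀ (by positivity) (by nlinarith)]
    nlinarith [mul_le_mul_of_nonneg_left key (sq_nonneg a)]

lemma sum_Icc_sq_div_sq_add_sq_le {a : ℝ} (ha : 1 ≤ a) (N : ℕ) :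
    ∑ j ∈ Icc (-(N : ℤ)) (N - 1), a ^ 2 / (a ^ 2 + (j : ℝ) ^ 2) ≤ 8 * a := by
  set T : ℤ → ℝ := fun j => (j : ℝ) / (a + |(j : ℝ)|)
  have hT : ∀ j, |T j| ≤ 1 := fun j => by
    have hpos : 0 < a + |(j : ℝ)| := by positivity
    rw [abs_div, abs_of_pos hpos]
    exact div_le_one_of_le₀ (by linarith) hpos.le
  calc ∑ j ∈ Icc (-(N : ℤ)) (N - 1), a ^ 2 / (a ^ 2 + (j : ℝ) ^ 2)
      ≤ ∑ j ∈ Ico (-(N : ℤ)) N, 4 * a * (T (j + 1) - T j) := by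
        rw [← Finset.Ico_add_one_right_eq_Icc, sub_add_cancel]
        exact sum_le_sum fun j _ => sq_div_sq_add_sq_le_telescope ha j
    _ = 4 * a * (T N - T (-N)) := by rw [← mul_sum, Int.sum_Ico_sub T (by omega)]
    _ ≤ 8 * a := by nlinarith [abs_le.1 (hT N), abs_le.1 (hT (-N))]

lemma SchwartzMap.exists_norm_le_div_one_add_sq {F : Type*} [NormedAddCommGroup F]
    [NormedSpace ℝ F] (f : SchwartzMap ℝ F) :
    ∃ A, 0 ≤ A ∧ ∀ x : ℝ, ‖f x‖ ≤ A / (1 + x ^ 2) := by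
  refine ⟨SchwartzMap.seminorm ℝ 0 0 f + SchwartzMap.seminorm ℝ 2 0 f, by positivity, fun x => ?_⟩
  have h₀ := f.le_seminorm' ℝ 0 0 x
  have h₂ := f.le_seminorm' ℝ 2 0 x
  rw [iteratedDeriv_zero, pow_zero, one_mul] at h₀
  rw [iteratedDeriv_zero, sq_abs] at h₂
  rw [le_div_iff₀ (by positivity)]
  linarith

lemma div_one_add_sq_le_of_half_le_abs {A a t : ℝ} (hA : 0 ≤ A) (ha : 0 < a)
    (h : a / 2 ≤ |t|) : A / (1 + t ^ 2) ≤ 4 * A / a ^ 2 := by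
  have key : a ^ 2 ≤ 4 * (1 + t ^ 2) := by nlinarith [sq_abs t]
  rw [div_le_div_iff₀ (by positivity) (by positivity)]
  nlinarith [mul_le_mul_of_nonneg_left key hA]

lemma div_one_add_sq_le_of_abs_mul_sub_le {A a t x : ℝ} (hA : 0 ≤ A) (ha : 2 ≤ a)
    (h : |a * t - x| ≤ 2) : A / (1 + t ^ 2) ≤ 4 * A * a ^ 2 / (a ^ 2 + x ^ 2) := by
  have hsq : (a * t - x) ^ 2 ≤ 4 := by nlinarith [sq_abs (a * t - x), abs_nonneg (a * t - x)]
  have key : a ^ 2 + x ^ 2 ≤ 4 * a ^ 2 * (1 + t ^ 2) := by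
    nlinarith [sq_nonneg (2 * a * t - x)]
  rw [div_le_div_iff₀ (by positivity) (by positivity)]
  nlinarith [mul_le_mul_of_nonneg_left key hA]

noncomputable def sample {α : Type*} (n : ℕ) (f : ℝ → α) : ℤ → α := fun j => f (j / n)

lemma sample_add_one {α : Type*} (n : ℕ) (f : ℝ → α) (j : ℤ) :
    sample n f (j + 1) = f (j / n + 1 / n) := by
  simp only [sample, Int.cast_add, Int.cast_one, add_div]

section FiniteDifference

variable {E : Type*} [NormedAddCommGroup E] [NormedSpace ℝ E] {f f' f'' : ℝ → E}

lemma norm_image_add_sub_le (hf : ∀ x, HasDerivAt f (f' x) x) {a h K : ℝ} (hh : 0 ≤ h)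
    (hK : ∀ t ∈ Set.Icc a (a + h), ‖f' t‖ ≤ K) : ‖f (a + h) - f a‖ ≤ K * h := by
  have := norm_image_sub_le_of_norm_deriv_le_segment' (fun x _ => (hf x).hasDerivWithinAt)
    (fun x hx => hK x (Set.Ico_subset_Icc_self hx)) (a + h) ⟨by linarith, le_rfl⟩
  rwa [add_sub_cancel_left] at this

lemma norm_second_difference_le (hf : ∀ x, HasDerivAt f (f' x) x)
    (hf' : ∀ x, HasDerivAt f' (f'' x) x) {a h K : ℝ} (hh : 0 ≤ h)
    (hK : ∀ t ∈ Set.Icc a (a + h + h), ‖f'' t‖ ≤ K) :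
    ‖(f (a + h + h) - f (a + h)) - (f (a + h) - f a)‖ ≤ K * h * h := by
  have hdiff : ∀ t, HasDerivAt (fun t => f (t + h) - f t) (f' (t + h) - f' t) t :=
    fun t => ((hf (t + h)).comp_add_const t h).sub (hf t)
  refine norm_image_add_sub_le hdiff hh fun t ht => norm_image_add_sub_le hf' hh fun s hs => ?_
  exact hK s ⟨by linarith [ht.1, hs.1], by linarith [ht.2, hs.2]⟩

lemma norm_sample_sub_le (hf : ∀ x, HasDerivAt f (f' x) x) (n : ℕ) (j : ℤ) {K : ℝ}
    (hK : ∀ t ∈ Set.Icc ((j : ℝ) / n) (j / n + 1 / n), ‖f' t‖ ≤ K) :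
    ‖sample n f (j + 1) - sample n f j‖ ≤ K / n := by
  rw [sample_add_one, div_eq_mul_one_div K]
  exact norm_image_add_sub_le hf (by positivity) hK

lemma norm_sample_second_difference_le (hf : ∀ x, HasDerivAt f (f' x) x)
    (hf' : ∀ x, HasDerivAt f' (f'' x) x) (n : ℕ) (j : ℤ) {K : ℝ}
    (hK : ∀ t ∈ Set.Icc ((j : ℝ) / n) (j / n + 1 / n + 1 / n), ‖f'' t‖ ≤ K) :
    ‖(sample n f (j + 1 + 1) - sample n f (j + 1)) - (sample n f (j + 1) - sample n f j)‖
      ≤ K / n ^ 2 := by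
  rw [sample_add_one, sample_add_one, Int.cast_add, Int.cast_one, add_div]
  refine (norm_second_difference_le hf hf' (by positivity) hK).trans_eq ?_
  ring

end FiniteDifference

section Boundary

variable (n : ℕ) (h : ℤ → ℂ) (l : ℤ)

lemma norm_psiF_le : ‖psiF n l‖ ≤ 2 * n := by
  rw [psiF, norm_mul, Complex.norm_natCast, mul_comm (2 : ℝ)]
  refine mul_le_mul_of_nonneg_left ((norm_sub_le _ _).trans_eq ?_) n.cast_nonneg
  norm_num [Complex.norm_exp, div_re, ← ofReal_natCast, ← ofReal_pow, ← ofReal_intCast]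

lemma norm_phiF_le : ‖phiF n l‖ ≤ 2 * n := by
  rw [phiF, norm_mul, Complex.norm_natCast, mul_comm (2 : ℝ)]
  refine mul_le_mul_of_nonneg_left ((norm_sub_le _ _).trans_eq ?_) n.cast_nonneg
  norm_num [Complex.norm_exp, div_re, ← ofReal_natCast, ← ofReal_pow, ← ofReal_intCast]

lemma norm_CF_le : ‖CF n h l‖ ≤ ‖h (n ^ 2 - 1)‖ + ‖h (-n ^ 2)‖ := by
  refine (norm_sub_le _ _).trans_eq ?_
  rw [norm_mul, norm_mul, Complex.norm_exp, Complex.norm_exp]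
  simp [div_re, ← ofReal_natCast, ← ofReal_pow, ← ofReal_intCast, ← ofReal_one, ← ofReal_sub]

lemma norm_DF : ‖DF n h l‖ = ‖h (-n ^ 2)‖ / n := by
  rw [DF, norm_mul, norm_mul, norm_mul, Complex.norm_exp, Complex.norm_exp]
  simp [← ofReal_natCast, ← ofReal_pow, ← ofReal_intCast, div_eq_inv_mul]

lemma norm_CF' : ‖CF' n h l‖ = ‖discDeriv n h (-n ^ 2)‖ := by
  rw [CF', norm_mul, Complex.norm_exp]
  simp

lemma norm_DF' : ‖DF' n h l‖ = ‖discDeriv n h (-n ^ 2)‖ / n := by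
  rw [DF', norm_mul, norm_mul, norm_mul, Complex.norm_exp, Complex.norm_exp]
  simp [← ofReal_natCast, ← ofReal_pow, ← ofReal_intCast, div_eq_inv_mul]

lemma norm_FF_le :
    ‖FF n h l‖ ≤ 6 * n * ‖h (-n ^ 2)‖ + 2 * n * ‖h (n ^ 2 - 1)‖ + 3 * ‖discDeriv n h (-n ^ 2)‖ := by
  have hψ := norm_psiF_le n l
  have hφ := norm_phiF_le n l
  have hC := norm_CF_le n h l
  calc ‖FF n h l‖
      ≤ ‖psiF n l‖ * ‖phiF n l‖ * ‖DF n h l‖ + ‖psiF n l‖ * ‖CF n h l‖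
        + ‖phiF n l‖ * ‖DF' n h l‖ + ‖CF' n h l‖ := by
        simp only [FF, ← norm_mul]
        exact norm_sub_le_of_le (norm_add_le_of_le (norm_sub_le _ _) le_rfl) le_rfl
    _ ≤ 2 * n * (2 * n) * (‖h (-n ^ 2)‖ / n) + 2 * n * (‖h (n ^ 2 - 1)‖ + ‖h (-n ^ 2)‖)
        + 2 * n * (‖discDeriv n h (-n ^ 2)‖ / n) + ‖discDeriv n h (-n ^ 2)‖ := by
        rw [norm_DF, norm_DF', norm_CF']
        gcongr
    _ ≤ _ := by
        rcases n.eq_zero_or_pos with rfl | hn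
        · simpa using le_mul_of_one_le_left (norm_nonneg _) (by norm_num : (1 : ℝ) ≤ 3)
        · field_simp
          nlinarith [norm_nonneg (h (-n ^ 2)), norm_nonneg (discDeriv n h (-n ^ 2))]

end Boundary

lemma norm_discFT_le (n : ℕ) (h : ℤ → ℂ) (l : ℤ) :
    ‖discFT n h l‖ ≤ (1 / n) * ∑ j ∈ Icc (-(n : ℤ) ^ 2) (n ^ 2 - 1), ‖h j‖ := by
  rw [discFT, norm_mul, norm_div, norm_one, Complex.norm_natCast]
  gcongr
  refine (norm_sum_le _ _).trans_eq (sum_congr rfl fun j _ => ?_)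
  rw [norm_mul, Complex.norm_exp]
  simp [div_re, ← ofReal_natCast, ← ofReal_pow, ← ofReal_intCast]

section Sample

variable {G G' G'' : ℝ → ℂ} {A₀ A₁ A₂ : ℝ} {n : ℕ}

lemma norm_discDeriv_discDeriv_sample_le (hG : ∀ x, HasDerivAt G (G' x) x)
    (hG' : ∀ x, HasDerivAt G' (G'' x) x) (hA₁ : 0 ≤ A₁) (hA₂ : 0 ≤ A₂)
    (hb₁ : ∀ x, ‖G' x‖ ≤ A₁ / (1 + x ^ 2)) (hb₂ : ∀ x, ‖G'' x‖ ≤ A₂ / (1 + x ^ 2))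
    (hn : 2 ≤ n) (j : ℤ) :
    ‖discDeriv n (discDeriv n (sample n G)) j‖ ≤
      4 * A₂ * n ^ 2 / (n ^ 2 + j ^ 2) + 4 * A₁ / n := by
  have hn₂ : (2 : ℝ) ≤ n := by exact_mod_cast hn
  have hn₀ : (0 : ℝ) < n := by linarith
  have h₁ : 0 ≤ 4 * A₂ * n ^ 2 / (n ^ 2 + j ^ 2) := by positivity
  have h₂ : 0 ≤ 4 * A₁ / n := by positivity
  by_cases htop : j = n ^ 2 - 1
  · simp only [discDeriv, if_pos htop, norm_zero]
    positivity
  by_cases hedge : j + 1 = n ^ 2 - 1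
  · have hj : (j : ℝ) / n = n - 2 / n := by
      rw [show j = n ^ 2 - 2 by omega]
      push_cast
      field_simp
    have hK : ∀ t ∈ Set.Icc ((j : ℝ) / n) (j / n + 1 / n), ‖G' t‖ ≤ 4 * A₁ / n ^ 2 := by
      intro t ht
      refine (hb₁ t).trans (div_one_add_sq_le_of_half_le_abs hA₁ hn₀ ?_)
      have : 2 / (n : ℝ) ≤ n / 2 := by rw [div_le_div_iff₀ hn₀ two_pos]; nlinarith
      exact le_abs.2 (Or.inl (by linarith [ht.1]))
    have hdiff := norm_sample_sub_le hG n j hK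
    simp only [discDeriv, if_neg htop, if_pos hedge, zero_sub, norm_mul, norm_neg,
      Complex.norm_natCast]
    calc (n : ℝ) * (n * ‖sample n G (j + 1) - sample n G j‖)
        ≤ n * (n * (4 * A₁ / n ^ 2 / n)) := by gcongr
      _ = 4 * A₁ / n := by field_simp
      _ ≤ _ := le_add_of_nonneg_left h₁
  · have hK : ∀ t ∈ Set.Icc ((j : ℝ) / n) (j / n + 1 / n + 1 / n),
        ‖G'' t‖ ≤ 4 * A₂ * n ^ 2 / (n ^ 2 + j ^ 2) := by
      intro t ht
      refine (hb₂ t).trans (div_one_add_sq_le_of_abs_mul_sub_le hA₂ hn₂ ?_)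
      have hlo := (div_le_iff₀ hn₀).1 ht.1
      have hhi : t * n ≤ j + 2 := by
        rw [← le_div_iff₀ hn₀]
        linarith [ht.2, (by ring : (j + 2 : ℝ) / n = j / n + 1 / n + 1 / n)]
      exact abs_le.2 ⟨by linarith, by linarith⟩
    have hdiff := norm_sample_second_difference_le hG hG' n j hK
    simp only [discDeriv, if_neg htop, if_neg hedge, ← mul_sub, norm_mul, Complex.norm_natCast]
    calc (n : ℝ) * (n * ‖sample n G (j + 1 + 1) - sample n G (j + 1) -
          (sample n G (j + 1) - sample n G j)‖)
        ≤ n * (n * (4 * A₂ * n ^ 2 / (n ^ 2 + j ^ 2) / n ^ 2)) := by gcongr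
      _ = 4 * A₂ * n ^ 2 / (n ^ 2 + j ^ 2) := by field_simp
      _ ≤ _ := le_add_of_nonneg_right h₂

lemma norm_discFT_discDeriv_discDeriv_sample_le (hG : ∀ x, HasDerivAt G (G' x) x)
    (hG' : ∀ x, HasDerivAt G' (G'' x) x) (hA₁ : 0 ≤ A₁) (hA₂ : 0 ≤ A₂)
    (hb₁ : ∀ x, ‖G' x‖ ≤ A₁ / (1 + x ^ 2)) (hb₂ : ∀ x, ‖G'' x‖ ≤ A₂ / (1 + x ^ 2))
    (hn : 2 ≤ n) (l : ℤ) :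
    ‖discFT n (discDeriv n (discDeriv n (sample n G))) l‖ ≤ 32 * A₂ + 8 * A₁ := by
  have hn₁ : (1 : ℝ) ≤ n := by exact_mod_cast (by omega : 1 ≤ n)
  have hsum := sum_Icc_sq_div_sq_add_sq_le hn₁ (n ^ 2)
  have hcard : (#(Icc (-(n : ℤ) ^ 2) (n ^ 2 - 1)) : ℝ) = 2 * n ^ 2 := by
    rw [Int.card_Icc,
      show (n : ℤ) ^ 2 - 1 + 1 - -(n : ℤ) ^ 2 = ((2 * n ^ 2 : ℕ) : ℤ) by push_cast; ring,
      Int.toNat_natCast]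
    push_cast
    ring
  push_cast at hsum
  calc ‖discFT n (discDeriv n (discDeriv n (sample n G))) l‖
      ≤ 1 / n * ∑ j ∈ Icc (-(n : ℤ) ^ 2) (n ^ 2 - 1),
          (4 * A₂ * (n ^ 2 / (n ^ 2 + j ^ 2)) + 4 * A₁ / n) := by
        refine (norm_discFT_le n _ l).trans
          (mul_le_mul_of_nonneg_left (sum_le_sum fun j _ => ?_) (by positivity))
        rw [← mul_div_assoc]
        exact norm_discDeriv_discDeriv_sample_le hG hG' hA₁ hA₂ hb₁ hb₂ hn j
    _ = 1 / n * (4 * A₂ * ∑ j ∈ Icc (-(n : ℤ) ^ 2) (n ^ 2 - 1), (n ^ 2 / (n ^ 2 + (j : ℝ) ^ 2))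
          + 2 * n ^ 2 * (4 * A₁ / n)) := by
        rw [sum_add_distrib, sum_const, nsmul_eq_mul, hcard, mul_sum]
    _ ≤ 1 / n * (4 * A₂ * (8 * n) + 2 * n ^ 2 * (4 * A₁ / n)) := by gcongr
    _ = 32 * A₂ + 8 * A₁ := by field_simp; ring

lemma norm_discDeriv_sample_neg_sq_le (hG : ∀ x, HasDerivAt G (G' x) x) (hA₁ : 0 ≤ A₁)
    (hb₁ : ∀ x, ‖G' x‖ ≤ A₁ / (1 + x ^ 2)) (hn : 2 ≤ n) :
    ‖discDeriv n (sample n G) (-n ^ 2)‖ ≤ 4 * A₁ / n ^ 2 := by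
  have hn₂ : (2 : ℝ) ≤ n := by exact_mod_cast hn
  have hn₀ : (0 : ℝ) < n := by linarith
  have hinv : 1 / (n : ℝ) ≤ n / 2 := by rw [div_le_div_iff₀ hn₀ two_pos]; nlinarith
  have hK : ∀ t ∈ Set.Icc (((-(n : ℤ) ^ 2 : ℤ) : ℝ) / n) ((-(n : ℤ) ^ 2 : ℤ) / n + 1 / n),
      ‖G' t‖ ≤ 4 * A₁ / n ^ 2 := by
    intro t ht
    refine (hb₁ t).trans (div_one_add_sq_le_of_half_le_abs hA₁ hn₀ ?_)
    have ht₂ : t ≤ -n + 1 / n := by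
      rw [show ((-(n : ℤ) ^ 2 : ℤ) : ℝ) / n = -n by push_cast; field_simp] at ht
      exact ht.2
    exact le_abs.2 (Or.inr (by linarith))
  have hne : -(n : ℤ) ^ 2 ≠ n ^ 2 - 1 := by nlinarith
  rw [discDeriv, if_neg hne, norm_mul, Complex.norm_natCast]
  calc (n : ℝ) * ‖sample n G (-n ^ 2 + 1) - sample n G (-n ^ 2)‖
      ≤ n * (4 * A₁ / n ^ 2 / n) := by gcongr; exact norm_sample_sub_le hG n _ hK
    _ = 4 * A₁ / n ^ 2 := by field_simp

lemma norm_FF_sample_le (hG : ∀ x, HasDerivAt G (G' x) x) (hA₀ : 0 ≤ A₀) (hA₁ : 0 ≤ A₁)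
    (hb₀ : ∀ x, ‖G x‖ ≤ A₀ / (1 + x ^ 2)) (hb₁ : ∀ x, ‖G' x‖ ≤ A₁ / (1 + x ^ 2))
    (hn : 2 ≤ n) (l : ℤ) : ‖FF n (sample n G) l‖ ≤ 16 * A₀ + 3 * A₁ := by
  have hn₂ : (2 : ℝ) ≤ n := by exact_mod_cast hn
  have hn₀ : (0 : ℝ) < n := by linarith
  have hinv : 1 / (n : ℝ) ≤ n / 2 := by rw [div_le_div_iff₀ hn₀ two_pos]; nlinarith
  have hleft : ‖sample n G (-n ^ 2)‖ ≤ 4 * A₀ / n ^ 2 := by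
    refine (hb₀ _).trans (div_one_add_sq_le_of_half_le_abs hA₀ hn₀ ?_)
    rw [show ((-(n : ℤ) ^ 2 : ℤ) : ℝ) / n = -n by push_cast; field_simp, abs_neg, abs_of_pos hn₀]
    linarith
  have hright : ‖sample n G (n ^ 2 - 1)‖ ≤ 4 * A₀ / n ^ 2 := by
    refine (hb₀ _).trans (div_one_add_sq_le_of_half_le_abs hA₀ hn₀ ?_)
    rw [show (((n : ℤ) ^ 2 - 1 : ℤ) : ℝ) / n = n - 1 / n by push_cast; field_simp]
    exact le_abs.2 (Or.inl (by linarith))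
  have hderiv := norm_discDeriv_sample_neg_sq_le hG hA₁ hb₁ hn
  calc ‖FF n (sample n G) l‖
      ≤ 6 * n * (4 * A₀ / n ^ 2) + 2 * n * (4 * A₀ / n ^ 2) + 3 * (4 * A₁ / n ^ 2) := by
        refine (norm_FF_le n _ l).trans ?_
        gcongr
    _ = 32 * A₀ / n + 12 * A₁ / n ^ 2 := by field_simp; ring
    _ ≤ 16 * A₀ + 3 * A₁ := by
        gcongr
        · rw [div_le_iff₀ hn₀]; nlinarith
        · have hsq : (4 : ℝ) ≤ n ^ 2 := by nlinarith
          rw [div_le_iff₀ (by positivity)]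
          nlinarith [mul_le_mul_of_nonneg_left hsq hA₁]

end Sample

/-- **Uniform boundedness.** For a Schwartz function `g`, sampling `g_n(j) = g(j/n)`, the
quantities `(D(D g_n))^_n(l)` and `F_n(l)` are bounded by a constant `W` independent of
`n ≥ 2` and of `l` with `-n² ≤ l ≤ n²-1`. -/
theorem unif_bounded (g : SchwartzMap ℝ ℂ) :
    ∃ W : ℝ, ∀ n : ℕ, 2 ≤ n → ∀ l : ℤ, -(n : ℤ) ^ 2 ≤ l → l ≤ (n : ℤ) ^ 2 - 1 →
      ‖discFT n
          (discDeriv n (discDeriv n (fun j : ℤ => g ((j : ℝ) / (n : ℝ))))) l‖ ≤ W ∧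
      ‖FF n (fun j : ℤ => g ((j : ℝ) / (n : ℝ))) l‖ ≤ W := by
  let g' := SchwartzMap.derivCLM ℝ ℂ g
  let g'' := SchwartzMap.derivCLM ℝ ℂ g'
  obtain ⟨A₀, hA₀, hb₀⟩ := g.exists_norm_le_div_one_add_sq
  obtain ⟨A₁, hA₁, hb₁⟩ := g'.exists_norm_le_div_one_add_sq
  obtain ⟨A₂, hA₂, hb₂⟩ := g''.exists_norm_le_div_one_add_sq
  have hg : ∀ x, HasDerivAt g (g' x) x := g.hasDerivAt
  have hg' : ∀ x, HasDerivAt g' (g'' x) x := g'.hasDerivAt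
  refine ⟨32 * (A₀ + A₁ + A₂), fun n hn l _ _ => ⟨?_, ?_⟩⟩
  · refine (norm_discFT_discDeriv_discDeriv_sample_le hg hg' hA₁ hA₂ hb₁ hb₂ hn l).trans ?_
    linarith
  · refine (norm_FF_sample_le hg hA₀ hA₁ hb₀ hb₁ hn l).trans ?_
    linarith
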